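/- For a prior G supported on [0,h] and any integer K ≥ ⌈2(2+he) log n / log log n⌉ with n ≥ 3, the Poisson mixture tail satisfies ε_K(G) = P_{Y~f_G}[Y ≥ K] ≤ 2/n². -/

import Mathlib

open MeasureTheory Real

/-- Poisson density with mean `θ` at point `y`. -/
noncomputable def poissonPdf (θ : ℝ) (y : ℕ) : ℝ :=
  Real.exp (-θ) * θ ^ y / (Nat.factorial y)

/-- Poisson mixture density `f_G`. -/
noncomputable def mixturePdf (G : Measure ℝ) (y : ℕ) : ℝ :=
  ∫ θ, poissonPdf θ y ∂G

/-!
A Poisson density with mean `θ ∈ [0, h]` is at most `h ^ y / y !`, so the tail of the mixture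
beyond `K` is at most the tail of the exponential series of `h`, which is `≤ (h ^ K / K !) e ^ h`
because `K ! j ! ≤ (K + j)!`; and `K ! ≥ (K / e) ^ K` turns this into `(h e / K) ^ K e ^ h`.
With `L = log n`, the choice of `K` gives `K / (h e) ≥ 2 L / log L`, whose logarithm is at least
`(log L) / 2` since `log log L ≤ (log L) / 2`. Hence
`K log (K / (h e)) ≥ (2 + h e) L ≥ 2 L + h`, and the bound is at most `e ^ (-2 L) = 1 / n²`.
-/

open scoped Nat

lemma poissonPdf_nonneg {θ : ℝ} (hθ : 0 ≤ θ) (y : ℕ) : 0 ≤ poissonPdf θ y := by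
  unfold poissonPdf
  positivity

lemma poissonPdf_le_pow_div_factorial {θ h : ℝ} (hθ : θ ∈ Set.Icc 0 h) (y : ℕ) :
    poissonPdf θ y ≤ h ^ y / y ! := by
  have hexp : exp (-θ) ≤ 1 := exp_le_one_iff.2 (neg_nonpos.2 hθ.1)
  unfold poissonPdf
  gcongr
  calc exp (-θ) * θ ^ y ≤ 1 * θ ^ y := by gcongr; exact pow_nonneg hθ.1 y
    _ ≤ h ^ y := by rw [one_mul]; exact pow_le_pow_left₀ hθ.1 hθ.2 y

lemma mixturePdf_nonneg {G : Measure ℝ} (hsupp : ∀ᵐ θ ∂G, 0 ≤ θ) (y : ℕ) :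
    0 ≤ mixturePdf G y :=
  integral_nonneg_of_ae (hsupp.mono fun _ hθ ↦ poissonPdf_nonneg hθ y)

lemma mixturePdf_le_pow_div_factorial {h : ℝ} {G : Measure ℝ} [IsProbabilityMeasure G]
    (hsupp : ∀ᵐ θ ∂G, θ ∈ Set.Icc 0 h) (y : ℕ) :
    mixturePdf G y ≤ h ^ y / y ! := by
  calc mixturePdf G y ≤ ∫ _, h ^ y / (y ! : ℝ) ∂G :=
        integral_mono_of_nonneg (hsupp.mono fun _ hθ ↦ poissonPdf_nonneg hθ.1 y)
          (integrable_const _) (hsupp.mono fun _ hθ ↦ poissonPdf_le_pow_div_factorial hθ y)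
    _ = h ^ y / y ! := by simp

lemma pow_div_factorial_add_le {x : ℝ} (hx : 0 ≤ x) (K j : ℕ) :
    x ^ (K + j) / (K + j)! ≤ x ^ K / K ! * (x ^ j / j !) := by
  have hfac : (K ! * j ! : ℝ) ≤ (K + j)! := by
    exact_mod_cast Nat.le_of_dvd (Nat.factorial_pos _)
      (Nat.factorial_mul_factorial_dvd_factorial_add K j)
  rw [pow_add, div_mul_div_comm]
  gcongr

lemma tsum_pow_div_factorial_eq_exp (x : ℝ) : ∑' n : ℕ, x ^ n / n ! = exp x := by
  rw [exp_eq_exp_ℝ, NormedSpace.exp_eq_tsum_div]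

lemma tsum_tail_pow_div_factorial_le {x : ℝ} (hx : 0 ≤ x) (K : ℕ) :
    ∑' y : {y : ℕ // K ≤ y}, x ^ (y : ℕ) / (y : ℕ)! ≤ x ^ K / K ! * exp x := by
  have hs := summable_pow_div_factorial x
  rw [← tsum_pow_div_factorial_eq_exp, ← tsum_mul_left]
  refine (hs.subtype _).tsum_le_tsum_of_inj (fun y ↦ (y : ℕ) - K) ?_ ?_ ?_ (hs.mul_left _)
  · rintro ⟨y, hy⟩ ⟨z, hz⟩ hyz
    simp only [Subtype.mk.injEq] at hyz ⊢
    omega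
  · intro j _
    positivity
  · rintro ⟨y, hy⟩
    obtain ⟨j, rfl⟩ := Nat.exists_eq_add_of_le hy
    simpa using pow_div_factorial_add_le hx K j

lemma tsum_tail_mixturePdf_le {h : ℝ} (hh : 0 ≤ h) {G : Measure ℝ} [IsProbabilityMeasure G]
    (hsupp : ∀ᵐ θ ∂G, θ ∈ Set.Icc 0 h) (K : ℕ) :
    ∑' y : {y : ℕ // K ≤ y}, mixturePdf G y ≤ h ^ K / K ! * exp h := by
  have hle := fun y : {y : ℕ // K ≤ y} ↦ mixturePdf_le_pow_div_factorial hsupp y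
  have hs := (summable_pow_div_factorial h).subtype {y | K ≤ y}
  have hnonneg := fun y : {y : ℕ // K ≤ y} ↦
    mixturePdf_nonneg (hsupp.mono fun _ hθ ↦ hθ.1) y
  calc ∑' y : {y : ℕ // K ≤ y}, mixturePdf G y
        ≤ ∑' y : {y : ℕ // K ≤ y}, h ^ (y : ℕ) / (y : ℕ)! :=
        (hs.of_nonneg_of_le hnonneg hle).tsum_le_tsum hle hs
    _ ≤ h ^ K / K ! * exp h := tsum_tail_pow_div_factorial_le hh K

lemma pow_div_factorial_le_mul_exp_one_div_pow {x : ℝ} (hx : 0 ≤ x) (K : ℕ) :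
    x ^ K / K ! ≤ (x * exp 1 / K) ^ K := by
  rcases K.eq_zero_or_pos with rfl | hK
  · simp
  have hKK : (K : ℝ) ^ K / K ! ≤ exp K := pow_div_factorial_le_exp _ K.cast_nonneg K
  calc x ^ K / K ! = (x / K) ^ K * ((K : ℝ) ^ K / K !) := by
        rw [div_pow]; field_simp
    _ ≤ (x / K) ^ K * exp K := by gcongr
    _ = (x * exp 1 / K) ^ K := by
        rw [← exp_one_pow, div_pow, div_pow, mul_pow]; ring

lemma log_le_half_self {t : ℝ} (ht : 0 < t) : log t ≤ t / 2 := by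
  have h1 := log_le_sub_one_of_pos (half_pos ht)
  have h2 := log_two_lt_d9
  rw [log_div ht.ne' two_ne_zero] at h1
  norm_num at h2
  linarith

lemma half_log_le_log_of_two_mul_div_log_le {L r : ℝ} (hL : 1 < L)
    (hr : 2 * L / log L ≤ r) :
    log L / 2 ≤ log r := by
  have hlogL : 0 < log L := log_pos hL
  have hloglog : log (log L) ≤ log L / 2 := log_le_half_self hlogL
  have hlog2 : 0 ≤ log 2 := log_nonneg one_le_two
  calc log L / 2 ≤ log 2 + log L - log (log L) := by linarith
    _ = log (2 * L / log L) := by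
        rw [log_div (by positivity) hlogL.ne', log_mul two_ne_zero (by positivity)]
    _ ≤ log r := log_le_log (by positivity) hr

lemma two_mul_add_le_mul_log_div {a L K : ℝ} (ha : 0 < a) (hL : 1 < L)
    (hK : 2 * (2 + a * exp 1) * L / log L ≤ K) :
    2 * L + a ≤ K * log (K / (a * exp 1)) := by
  have hlogL : 0 < log L := log_pos hL
  have hae : 0 < a * exp 1 := by positivity
  have ha_le : a ≤ a * exp 1 := le_mul_of_one_le_right ha.le (one_le_exp zero_le_one)
  have hK0 : 0 ≤ K := le_trans (by positivity) hK
  have hratio : 2 * L / log L ≤ K / (a * exp 1) := by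
    rw [le_div_iff₀ hae]
    calc 2 * L / log L * (a * exp 1) ≤ 2 * L / log L * (2 + a * exp 1) := by gcongr; linarith
      _ = 2 * (2 + a * exp 1) * L / log L := by ring
      _ ≤ K := hK
  calc 2 * L + a ≤ (2 + a * exp 1) * L := by nlinarith
    _ = 2 * (2 + a * exp 1) * L / log L * (log L / 2) := by field_simp
    _ ≤ K * log (K / (a * exp 1)) := by
        gcongr
        exact half_log_le_log_of_two_mul_div_log_le hL hratio

lemma pow_mul_exp_le_exp_neg {b a c : ℝ} (hb : 0 < b) (K : ℕ) (h : c + a ≤ K * log b⁻¹) :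
    b ^ K * exp a ≤ exp (-c) := by
  rw [← exp_log (pow_pos hb K), ← exp_add, exp_le_exp, log_pow]
  rw [log_inv] at h
  linarith

/-- for a prior `G` supported on `[0,h]`, `n ≥ 3` and any integer
`K ≥ 2(2+he)·log n / log log n`, the Poisson mixture tail satisfies
`ε_K(G) = P_{Y~f_G}[Y ≥ K] ≤ 2/n²`. -/
theorem tail_bound_for_bounded_prior (h : ℝ) (hh : 0 < h)
    (G : Measure ℝ) [IsProbabilityMeasure G] (hsupp : ∀ᵐ θ ∂G, θ ∈ Set.Icc 0 h)
    (n : ℕ) (hn : 3 ≤ n) (K : ℕ)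
    (hK : 2 * (2 + h * Real.exp 1) * Real.log n / Real.log (Real.log n) ≤ K) :
    ∑' y : {y : ℕ // K ≤ y}, mixturePdf G y ≤ 2 / (n : ℝ) ^ 2 := by
  have hlog : 1 < log n := by
    have he := exp_one_lt_d9
    have h3 : (3 : ℝ) ≤ n := by exact_mod_cast hn
    rw [lt_log_iff_exp_lt (by positivity)]
    norm_num at he
    linarith
  have hK0 : 0 < (K : ℝ) := lt_of_lt_of_le (by have := log_pos hlog; positivity) hK
  have hkey := two_mul_add_le_mul_log_div hh hlog hK
  calc ∑' y : {y : ℕ // K ≤ y}, mixturePdf G y ≤ h ^ K / K ! * exp h :=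
        tsum_tail_mixturePdf_le hh.le hsupp K
    _ ≤ (h * exp 1 / K) ^ K * exp h := by
        gcongr
        exact pow_div_factorial_le_mul_exp_one_div_pow hh.le K
    _ ≤ exp (-(2 * log n)) := pow_mul_exp_le_exp_neg (by positivity) K (by rwa [inv_div])
    _ = 1 / (n : ℝ) ^ 2 := by
        rw [exp_neg, ← one_div, ← Nat.cast_ofNat, ← log_pow, exp_log (by positivity)]
    _ ≤ 2 / (n : ℝ) ^ 2 := by gcongr; norm_num
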